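/- arXiv:2510.11057 — 4 statements merged into one kernel-verified Lean document; each statement's English description precedes it below -/
import Mathlib

section
/- Let T > 0 and let p : [0, T] × E → ℝ be such that for every s ∈ [0, T], p(s, ·) is positive at a point x ∈ E and differentiable at x, the function s ↦ p(s, x) is integrable on [0, T] with Q(x) := ∫₀ᵀ p(s, x) ds > 0, and the function x ↦ ∫₀ᵀ p(s, x) ds is differentiable at x with gradient ∇Q(x) = ∫₀ᵀ ∇ₓ p(s, x) ds (a Bochner integral of the pointwise gradients). Then for every t ∈ [0, T], the continuous-time temporal log-posterior satisfies ∇ log(p(t, ·)/Q)(x) = ∇ log p(t, ·)(x) − ∫₀ᵀ γ(s, x) · ∇ log p(s, ·)(x) ds, where γ(s, x) = p(s, x)/Q(x). -/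
open scoped RealInnerProductSpace BigOperators
open MeasureTheory intervalIntegral

lemma grad_log_aux {d : ℕ} (f : EuclideanSpace ℝ (Fin d) → ℝ)
    (x : EuclideanSpace ℝ (Fin d)) (hf : DifferentiableAt ℝ f x) (hne : f x ≠ 0) :
    gradient (fun y => Real.log (f y)) x = (f x)⁻¹ • gradient f x := by
  have h : HasFDerivAt (fun y => Real.log (f y)) ((f x)⁻¹ • fderiv ℝ f x) x :=
    (Real.hasDerivAt_log hne).comp_hasFDerivAt x hf.hasFDerivAt
  unfold gradient
  rw [h.fderiv, _root_.map_smul]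

/-- **Continuous-time TAG decomposition.**
Let `p : [0,T] × E → ℝ` with `p s` positive and differentiable at `x` for every
`s ∈ [0,T]`, `s ↦ p s x` integrable on `[0,T]` with `Q x = ∫_0^T p s x ds > 0`,
and suppose the function `y ↦ ∫_0^T p s y ds` is differentiable at `x` with
gradient given by the (Bochner) integral of the pointwise gradients.  Then for
every `t ∈ [0,T]`,
`∇ log (p t / Q) x = ∇ log (p t) x - ∫_0^T γ s x • ∇ log (p s) x ds`,
where `γ s x = p s x / Q x`. -/
theorem tag_decompose_continuous
    (d : ℕ) (hd : 1 ≤ d)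
    (T : ℝ) (hT : 0 < T)
    (p : ℝ → EuclideanSpace ℝ (Fin d) → ℝ)
    (x : EuclideanSpace ℝ (Fin d))
    (hpos : ∀ s ∈ Set.Icc (0 : ℝ) T, 0 < p s x)
    (hdiff : ∀ s ∈ Set.Icc (0 : ℝ) T, DifferentiableAt ℝ (p s) x)
    (hint : IntervalIntegrable (fun s => p s x) MeasureTheory.volume 0 T)
    (hQpos : 0 < ∫ s in (0 : ℝ)..T, p s x)
    (hQdiff : DifferentiableAt ℝ (fun y => ∫ s in (0 : ℝ)..T, p s y) x)
    (hgradint : IntervalIntegrable (fun s => gradient (p s) x) MeasureTheory.volume 0 T)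
    (hQgrad : gradient (fun y => ∫ s in (0 : ℝ)..T, p s y) x
        = ∫ s in (0 : ℝ)..T, gradient (p s) x) :
    ∀ t ∈ Set.Icc (0 : ℝ) T,
      gradient (fun y => Real.log (p t y / ∫ s in (0 : ℝ)..T, p s y)) x
        = gradient (fun y => Real.log (p t y)) x
          - ∫ s in (0 : ℝ)..T,
              (p s x / ∫ u in (0 : ℝ)..T, p u x) •
                gradient (fun y => Real.log (p s y)) x := by
  intro t ht
  set Q : EuclideanSpace ℝ (Fin d) → ℝ := fun y => ∫ s in (0 : ℝ)..T, p s y with hQdef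
  have hq : 0 < Q x := hQpos
  have hpt := hpos t ht
  have hdt := hdiff t ht
  -- eventual equality log (p t / Q) = log (p t) - log Q near x
  have h1 : ∀ᶠ y in nhds x, 0 < p t y :=
    hdt.continuousAt.eventually (eventually_gt_nhds hpt)
  have h2 : ∀ᶠ y in nhds x, 0 < Q y :=
    hQdiff.continuousAt.eventually (eventually_gt_nhds hq)
  have hev : (fun y => Real.log (p t y / Q y))
      =ᶠ[nhds x] fun y => Real.log (p t y) - Real.log (Q y) := by
    filter_upwards [h1, h2] with y hy1 hy2
    rw [Real.log_div hy1.ne' hy2.ne']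
  have hdlt : DifferentiableAt ℝ (fun y => Real.log (p t y)) x := hdt.log hpt.ne'
  have hdlQ : DifferentiableAt ℝ (fun y => Real.log (Q y)) x := hQdiff.log hq.ne'
  have hL : gradient (fun y => Real.log (p t y / Q y)) x
      = gradient (fun y => Real.log (p t y)) x - gradient (fun y => Real.log (Q y)) x := by
    unfold gradient
    rw [hev.fderiv_eq, fderiv_fun_sub hdlt hdlQ, _root_.map_sub]
  rw [hL, grad_log_aux Q x hQdiff hq.ne', hQgrad]
  congr 1
  have hcong : Set.EqOn
      (fun s => (p s x / Q x) • gradient (fun y => Real.log (p s y)) x)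
      (fun s => (Q x)⁻¹ • gradient (p s) x) (Set.uIcc 0 T) := by
    intro s hs
    rw [Set.uIcc_of_le hT.le] at hs
    have hps := hpos s hs
    simp only
    rw [grad_log_aux (p s) x (hdiff s hs) hps.ne', smul_smul]
    congr 1
    field_simp
  rw [intervalIntegral.integral_congr hcong, intervalIntegral.integral_smul]
end

section
/- Let m ∈ E, η > 0, c ∈ ℝ, and g ∈ E (interpreted as the gradient at m of a property loss ℓ₁(A₁(m), c₁)). Consider on E the posterior density proportional to exp(−‖m − x‖²/(2η²)) · exp(−c − ⟨x − m, g⟩) with respect to Lebesgue measure. Then this density is integrable with positive total mass, and the posterior expectation equals m − η² g; that is, ∫ x · w(x) dx / ∫ w(x) dx = m − η² g where w(x) = exp(−‖m − x‖²/(2η²) − c − ⟨x − m, g⟩). -/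
open scoped RealInnerProductSpace BigOperators
open MeasureTheory

section Aux

variable {d : ℕ}

local notation "E" => EuclideanSpace ℝ (Fin d)

open Real

lemma aux_integrable_gauss (a : ℝ) (ha : 0 < a) :
    Integrable (fun v : E => rexp (-a * ‖v‖^2)) volume := by
  have h := (GaussianFourier.integrable_cexp_neg_mul_sq_norm_add
    (V := E) (b := (a : ℂ)) (by simpa using ha) 0 0).norm
  refine h.congr (Filter.Eventually.of_forall fun v => ?_)
  simp [Complex.norm_exp]
  exact Or.inl (by norm_cast)

lemma aux_integrable_gauss_shift (a : ℝ) (ha : 0 < a) (μ : E) :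
    Integrable (fun x : E => rexp (-a * ‖x - μ‖^2)) volume := by
  have hmp : MeasurePreserving (fun x : E => x - μ) volume volume :=
    measurePreserving_sub_right volume μ
  have := (hmp.integrable_comp_emb
    (Homeomorph.subRight μ).measurableEmbedding).2 (aux_integrable_gauss a ha)
  exact this

lemma aux_bound (a s : ℝ) (ha : 0 < a) (hs : 0 ≤ s) :
    s * rexp (-a * s^2) ≤ max 1 (2/a) * rexp (-(a/2) * s^2) := by
  rcases le_or_gt s 1 with h1 | h1
  · have step1 : s * rexp (-a * s^2) ≤ 1 * rexp (-(a/2) * s^2) := by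
      apply mul_le_mul h1 (Real.exp_le_exp.2 (by nlinarith)) (Real.exp_pos _).le one_pos.le
    refine step1.trans ?_
    gcongr
    exact le_max_left _ _
  · have key : s * rexp (-(a/2) * s^2) ≤ 2/a := by
      have h2 : (a/2) * s^2 ≤ rexp ((a/2) * s^2) := (Real.add_one_le_exp _).trans' (by linarith)
      rw [neg_mul, Real.exp_neg, mul_inv_le_iff₀ (Real.exp_pos _), mul_comm (2/a)]
      calc s ≤ s^2 := by nlinarith
        _ = (2/a) * ((a/2) * s^2) := by field_simp
        _ ≤ (2/a) * rexp ((a/2) * s^2) := by gcongr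
        _ = rexp ((a/2) * s^2) * (2/a) := mul_comm _ _
    have expand : s * rexp (-a * s^2) = (s * rexp (-(a/2) * s^2)) * rexp (-(a/2) * s^2) := by
      rw [mul_assoc, ← Real.exp_add]; ring_nf
    rw [expand]
    have : (s * rexp (-(a/2) * s^2)) * rexp (-(a/2) * s^2) ≤ (2/a) * rexp (-(a/2) * s^2) := by
      gcongr
    refine this.trans ?_
    gcongr
    exact le_max_right _ _

lemma aux_integrable_gauss_smul (a : ℝ) (ha : 0 < a) :
    Integrable (fun v : E => rexp (-a * ‖v‖^2) • v) volume := by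
  have hcont : Continuous (fun v : E => rexp (-a * ‖v‖^2) • v) := by
    fun_prop
  refine Integrable.mono' ((aux_integrable_gauss (a/2) (by positivity)).const_mul
    (max 1 (2/a))) hcont.aestronglyMeasurable (Filter.Eventually.of_forall fun v => ?_)
  rw [norm_smul, Real.norm_eq_abs, abs_of_pos (Real.exp_pos _), mul_comm]
  have := aux_bound a ‖v‖ ha (norm_nonneg v)
  calc ‖v‖ * rexp (-a * ‖v‖^2) ≤ max 1 (2/a) * rexp (-(a/2) * ‖v‖^2) := this
    _ = max 1 (2/a) * rexp (-(a/2) * ‖v‖^2) := rfl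

lemma aux_integral_gauss_smul (a : ℝ) (ha : 0 < a) :
    ∫ v : E, rexp (-a * ‖v‖^2) • v = 0 := by
  set f : E → E := fun v => rexp (-a * ‖v‖^2) • v with hf
  have h1 : ∫ v : E, f (-v) = ∫ v : E, f v := integral_neg_eq_self f volume
  have h2 : ∀ v : E, f (-v) = -(f v) := by
    intro v; simp only [hf, norm_neg, smul_neg]
  simp_rw [h2, integral_neg] at h1
  have h3 : (∫ v : E, f v) + (∫ v : E, f v) = 0 := by
    nth_rewrite 1 [← h1]; exact neg_add_cancel _
  have h5 : (2:ℝ) • (∫ v : E, f v) = 0 := by rw [two_smul]; exact h3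
  exact (smul_eq_zero.mp h5).resolve_left two_ne_zero

end Aux

/-- **Single-condition reparameterization (posterior mean).**
For `m ∈ E`, `η > 0`, `c ∈ ℝ` and `g ∈ E` (the gradient of the property loss),
the posterior density `w x = exp (-‖m - x‖² / (2η²) - c - ⟪x - m, g⟫)` on
Euclidean space (with respect to the Lebesgue/volume measure) is integrable
with positive total mass, and the posterior expectation equals `m - η² • g`:
`(∫ w)⁻¹ • ∫ w x • x dx = m - η² • g`. -/
theorem single_condition_posterior_mean
    (d : ℕ) (hd : 1 ≤ d)
    (η : ℝ) (hη : 0 < η)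
    (c : ℝ)
    (m g : EuclideanSpace ℝ (Fin d))
    (w : EuclideanSpace ℝ (Fin d) → ℝ)
    (hw : ∀ x, w x = Real.exp (-(‖m - x‖ ^ 2 / (2 * η ^ 2)) - c - ⟪x - m, g⟫)) :
    Integrable w volume ∧
    0 < ∫ x, w x ∧
    Integrable (fun x => w x • x) volume ∧
    (∫ x, w x)⁻¹ • (∫ x, w x • x) = m - η ^ 2 • g := by
  classical
  set a : ℝ := (2 * η ^ 2)⁻¹ with ha_def
  have ha : 0 < a := by positivity
  set μ : EuclideanSpace ℝ (Fin d) := m - η ^ 2 • g with hμ_def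
  set C : ℝ := Real.exp (η ^ 2 * ‖g‖ ^ 2 / 2 - c) with hC_def
  have hC : 0 < C := Real.exp_pos _
  -- rewrite w as a shifted Gaussian
  have hwf : ∀ x, w x = C * Real.exp (-a * ‖x - μ‖ ^ 2) := by
    intro x
    rw [hw x, hC_def, ← Real.exp_add]
    congr 1
    have hxμ : x - μ = (x - m) + η ^ 2 • g := by
      rw [hμ_def]; abel
    have hnorm : ‖x - μ‖ ^ 2
        = ‖x - m‖ ^ 2 + 2 * (η ^ 2 * ⟪x - m, g⟫) + (η ^ 2) ^ 2 * ‖g‖ ^ 2 := by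
      rw [hxμ, @norm_add_sq_real, real_inner_smul_right, norm_smul]
      rw [Real.norm_eq_abs, abs_of_pos (by positivity : (0:ℝ) < η ^ 2)]
      ring
    have hrev : ‖m - x‖ = ‖x - m‖ := norm_sub_rev m x
    rw [hrev, hnorm, ha_def]
    have hη2 : (2 * η ^ 2) ≠ 0 := by positivity
    field_simp
    ring
  have hw_eq : w = fun x => C * Real.exp (-a * ‖x - μ‖ ^ 2) := funext hwf
  -- integrability of w
  have hIshift : Integrable (fun x : EuclideanSpace ℝ (Fin d)
      => Real.exp (-a * ‖x - μ‖ ^ 2)) volume := aux_integrable_gauss_shift a ha μ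
  have hIw : Integrable w volume := by
    rw [hw_eq]; exact hIshift.const_mul C
  -- total mass
  have htrans : (∫ x : EuclideanSpace ℝ (Fin d), Real.exp (-a * ‖x - μ‖ ^ 2))
      = ∫ y : EuclideanSpace ℝ (Fin d), Real.exp (-a * ‖y‖ ^ 2) :=
    integral_sub_right_eq_self (fun y => Real.exp (-a * ‖y‖ ^ 2)) μ
  have hIpos : 0 < ∫ y : EuclideanSpace ℝ (Fin d), Real.exp (-a * ‖y‖ ^ 2) := by
    rw [GaussianFourier.integral_rexp_neg_mul_sq_norm ha]
    exact Real.rpow_pos_of_pos (by positivity) _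
  have hint_w : (∫ x, w x) = C * ∫ y : EuclideanSpace ℝ (Fin d), Real.exp (-a * ‖y‖ ^ 2) := by
    rw [hw_eq, integral_const_mul, htrans]
  have hwpos : 0 < ∫ x, w x := by
    rw [hint_w]; exact mul_pos hC hIpos
  -- integrability of w • x
  have hF : (fun x => w x • x)
      = fun x => (fun y : EuclideanSpace ℝ (Fin d) =>
          C • (Real.exp (-a * ‖y‖ ^ 2) • y) + (C * Real.exp (-a * ‖y‖ ^ 2)) • μ) (x - μ) := by
    funext x
    simp only [hwf x, smul_smul, ← add_smul]
    rw [← smul_add]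
    congr 1
    · abel
  have h1 : Integrable (fun y : EuclideanSpace ℝ (Fin d) =>
      C • (Real.exp (-a * ‖y‖ ^ 2) • y)) volume := by
    simpa [Pi.smul_apply, Pi.smul_def] using (aux_integrable_gauss_smul a ha).smul C
  have h2 : Integrable (fun y : EuclideanSpace ℝ (Fin d) =>
      (C * Real.exp (-a * ‖y‖ ^ 2)) • μ) volume :=
    ((aux_integrable_gauss a ha).const_mul C).smul_const μ
  have hIsum : Integrable (fun y : EuclideanSpace ℝ (Fin d) =>
      C • (Real.exp (-a * ‖y‖ ^ 2) • y) + (C * Real.exp (-a * ‖y‖ ^ 2)) • μ) volume :=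
    h1.add h2
  have hIwx : Integrable (fun x => w x • x) volume := by
    rw [hF]
    have hmp : MeasurePreserving (fun x : EuclideanSpace ℝ (Fin d) => x - μ) volume volume :=
      measurePreserving_sub_right volume μ
    exact (hmp.integrable_comp_emb (Homeomorph.subRight μ).measurableEmbedding).2 hIsum
  -- the first moment
  have hmoment : (∫ x, w x • x) = (∫ x, w x) • μ := by
    rw [hF]
    rw [integral_sub_right_eq_self (fun y : EuclideanSpace ℝ (Fin d) =>
      C • (Real.exp (-a * ‖y‖ ^ 2) • y) + (C * Real.exp (-a * ‖y‖ ^ 2)) • μ) μ]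
    rw [integral_add h1 h2]
    rw [MeasureTheory.integral_smul C (fun y : EuclideanSpace ℝ (Fin d) =>
      Real.exp (-a * ‖y‖ ^ 2) • y), aux_integral_gauss_smul a ha, smul_zero, zero_add]
    rw [integral_smul_const, integral_const_mul, hint_w]
  refine ⟨hIw, hwpos, hIwx, ?_⟩
  rw [hmoment, inv_smul_smul₀ (ne_of_gt hwpos)]
end

section
/- Let m ∈ E, η > 0, c₁, c₂ ∈ ℝ, and g₁, g₂ ∈ E (interpreted respectively as the gradient at m of a first property loss ℓ₁, and the gradient of a second property loss ℓ₂ evaluated at the intermediate sample m − η̃² g₁ that reflects the first condition). Consider on E the posterior density proportional to exp(−‖m − x‖²/(2η²)) · exp(−c₁ − ⟨x − m, g₁⟩) · exp(−c₂ − ⟨x − m, g₂⟩) with respect to Lebesgue measure. Then this density is integrable with positive total mass, and the posterior expectation equals m − η² g₁ − η² g₂. -/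
open scoped RealInnerProductSpace BigOperators
open MeasureTheory

variable {d : ℕ}


lemma gauss_integrable {b : ℝ} (hb : 0 < b) :
    Integrable (fun x : EuclideanSpace ℝ (Fin d) => Real.exp (-b * ‖x‖ ^ 2)) := by
  have h := GaussianFourier.integrable_cexp_neg_mul_sq_norm_add (V := EuclideanSpace ℝ (Fin d))
    (b := (b : ℂ)) (by simpa using hb) 0 0
  have := h.norm
  rw [show (fun x : EuclideanSpace ℝ (Fin d) => Real.exp (-b * ‖x‖ ^ 2))
      = fun x : EuclideanSpace ℝ (Fin d) =>
        ‖Complex.exp (-(b:ℂ) * ‖x‖ ^ 2 + 0 * ⟪(0 : EuclideanSpace ℝ (Fin d)), x⟫)‖ by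
    funext x
    rw [Complex.norm_exp]
    congr 1
    rw [show (-(b:ℂ) * (‖x‖:ℂ) ^ 2 + 0 * ((⟪(0 : EuclideanSpace ℝ (Fin d)), x⟫ : ℝ):ℂ))
        = ((-b * ‖x‖ ^ 2 : ℝ) : ℂ) by push_cast; ring, Complex.ofReal_re]]
  exact this

lemma gauss_pos {b : ℝ} (hb : 0 < b) :
    0 < ∫ x : EuclideanSpace ℝ (Fin d), Real.exp (-b * ‖x‖ ^ 2) := by
  rw [show (fun x : EuclideanSpace ℝ (Fin d) => Real.exp (-b * ‖x‖ ^ 2))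
      = (fun x : EuclideanSpace ℝ (Fin d) => Real.exp (-b * ‖x‖ ^ 2)) from rfl]
  rw [GaussianFourier.integral_rexp_neg_mul_sq_norm hb]
  positivity

lemma gauss_moment_integrable {b : ℝ} (hb : 0 < b) :
    Integrable (fun x : EuclideanSpace ℝ (Fin d) => Real.exp (-b * ‖x‖ ^ 2) • x) := by
  have hmaj : Integrable (fun x : EuclideanSpace ℝ (Fin d) =>
      (1 + 2 / b) * Real.exp (-(b / 2) * ‖x‖ ^ 2)) :=
    (gauss_integrable (by linarith : (0:ℝ) < b / 2)).const_mul _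
  refine hmaj.mono' ?_ ?_
  · exact (Continuous.rexp (by continuity)).aestronglyMeasurable.smul
      continuous_id.aestronglyMeasurable
  · filter_upwards with x
    rw [norm_smul, Real.norm_eq_abs, abs_of_pos (Real.exp_pos _)]
    have h1 : ‖x‖ ≤ (1 + 2 / b) * Real.exp ((b / 2) * ‖x‖ ^ 2) := by
      have he : (b / 2) * ‖x‖ ^ 2 ≤ Real.exp ((b / 2) * ‖x‖ ^ 2) :=
        le_trans (by linarith [Real.add_one_le_exp ((b / 2) * ‖x‖ ^ 2)])
          le_rfl
      have h2 : ‖x‖ ≤ 1 + ‖x‖ ^ 2 := by nlinarith [norm_nonneg x, sq_nonneg (‖x‖ - 1)]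
      have h3 : ‖x‖ ^ 2 ≤ (2 / b) * Real.exp ((b / 2) * ‖x‖ ^ 2) := by
          calc ‖x‖ ^ 2 = (2 / b) * ((b / 2) * ‖x‖ ^ 2) := by field_simp
          _ ≤ (2 / b) * Real.exp ((b / 2) * ‖x‖ ^ 2) := by
              apply mul_le_mul_of_nonneg_left he (by positivity)
      have h4 : (1:ℝ) ≤ Real.exp ((b / 2) * ‖x‖ ^ 2) :=
        Real.one_le_exp (by positivity)
      calc ‖x‖ ≤ 1 + ‖x‖ ^ 2 := h2
        _ ≤ Real.exp ((b / 2) * ‖x‖ ^ 2) + (2 / b) * Real.exp ((b / 2) * ‖x‖ ^ 2) := by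
            linarith
        _ = (1 + 2 / b) * Real.exp ((b / 2) * ‖x‖ ^ 2) := by ring
    calc Real.exp (-b * ‖x‖ ^ 2) * ‖x‖
        ≤ Real.exp (-b * ‖x‖ ^ 2) * ((1 + 2 / b) * Real.exp ((b / 2) * ‖x‖ ^ 2)) :=
          mul_le_mul_of_nonneg_left h1 (Real.exp_pos _).le
      _ = (1 + 2 / b) * Real.exp (-(b / 2) * ‖x‖ ^ 2) := by
          rw [mul_comm, mul_assoc, ← Real.exp_add]; ring_nf

lemma gauss_moment_zero {b : ℝ} (hb : 0 < b) :
    ∫ x : EuclideanSpace ℝ (Fin d), Real.exp (-b * ‖x‖ ^ 2) • x = 0 := by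
  have h := integral_neg_eq_self
    (fun x : EuclideanSpace ℝ (Fin d) => Real.exp (-b * ‖x‖ ^ 2) • x) volume
  simp only [norm_neg, smul_neg] at h
  have : ∫ x : EuclideanSpace ℝ (Fin d), -(Real.exp (-b * ‖x‖ ^ 2) • x)
      = - ∫ x : EuclideanSpace ℝ (Fin d), Real.exp (-b * ‖x‖ ^ 2) • x := integral_neg _
  rw [this] at h
  have h2 : (∫ x : EuclideanSpace ℝ (Fin d), Real.exp (-b * ‖x‖ ^ 2) • x)
      + ∫ x : EuclideanSpace ℝ (Fin d), Real.exp (-b * ‖x‖ ^ 2) • x = 0 := by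
    nth_rewrite 1 [← h]; abel
  have h3 : (2:ℝ) • (∫ x : EuclideanSpace ℝ (Fin d), Real.exp (-b * ‖x‖ ^ 2) • x) = 0 := by
    rw [two_smul]; exact h2
  simpa using (smul_eq_zero.mp h3).resolve_left (by norm_num)

/-- **Two-condition reparameterization (posterior mean).**
For `m ∈ E`, `η > 0`, `c₁, c₂ ∈ ℝ` and `g₁, g₂ ∈ E` (the gradients of the two
property losses, `g₂` being evaluated at the intermediate sample reflecting the
first condition), the posterior density
`w x = exp (-‖m - x‖²/(2η²)) * exp (-c₁ - ⟪x - m, g₁⟫) * exp (-c₂ - ⟪x - m, g₂⟫)`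
on Euclidean space is integrable with positive total mass, and the posterior
expectation equals `m - η² • g₁ - η² • g₂`. -/
theorem two_condition_posterior_mean
    (d : ℕ) (hd : 1 ≤ d)
    (η : ℝ) (hη : 0 < η)
    (c₁ c₂ : ℝ)
    (m g₁ g₂ : EuclideanSpace ℝ (Fin d))
    (w : EuclideanSpace ℝ (Fin d) → ℝ)
    (hw : ∀ x, w x = Real.exp (-(‖m - x‖ ^ 2 / (2 * η ^ 2)))
        * Real.exp (-c₁ - ⟪x - m, g₁⟫)
        * Real.exp (-c₂ - ⟪x - m, g₂⟫)) :
    Integrable w volume ∧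
    0 < ∫ x, w x ∧
    Integrable (fun x => w x • x) volume ∧
    (∫ x, w x)⁻¹ • (∫ x, w x • x) = m - η ^ 2 • g₁ - η ^ 2 • g₂ := by
  set a : ℝ := 1 / (2 * η ^ 2) with ha_def
  have ha : 0 < a := by positivity
  set g : EuclideanSpace ℝ (Fin d) := g₁ + g₂ with hg_def
  set μ : EuclideanSpace ℝ (Fin d) := m - η ^ 2 • g with hμ_def
  set K : ℝ := Real.exp (η ^ 2 * ‖g‖ ^ 2 / 2 - c₁ - c₂) with hK_def
  have hK : 0 < K := Real.exp_pos _
  -- key rewriting of the density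
  have hwK : ∀ x, w x = K * Real.exp (-a * ‖x - μ‖ ^ 2) := by
    intro x
    rw [hw, ← Real.exp_add, ← Real.exp_add, hK_def, ← Real.exp_add]
    congr 1
    have hxμ : x - μ = (x - m) + η ^ 2 • g := by rw [hμ_def]; abel
    have hnorm : ‖x - μ‖ ^ 2 = ‖x - m‖ ^ 2 + 2 * (η ^ 2 * ⟪x - m, g⟫)
        + (η ^ 2) ^ 2 * ‖g‖ ^ 2 := by
      rw [hxμ, norm_add_sq_real, real_inner_smul_right, norm_smul]
      simp only [mul_pow, abs_of_pos (pow_pos hη 2), Real.norm_eq_abs, sq_abs]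
    have hinner : ⟪x - m, g⟫ = ⟪x - m, g₁⟫ + ⟪x - m, g₂⟫ := by
      rw [hg_def, inner_add_right]
    have hms : ‖m - x‖ = ‖x - m‖ := norm_sub_rev m x
    rw [hms, hnorm, hinner, ha_def]
    have hη2 : η ^ 2 ≠ 0 := by positivity
    field_simp
    ring
  have hwfun : w = fun x => K * Real.exp (-a * ‖x - μ‖ ^ 2) := funext hwK
  -- integrability of w
  have hint_w : Integrable w volume := by
    rw [hwfun]
    exact ((gauss_integrable ha).comp_sub_right μ).const_mul K
  -- total mass
  have hIw : ∫ x, w x = K * ∫ x : EuclideanSpace ℝ (Fin d), Real.exp (-a * ‖x‖ ^ 2) := by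
    rw [hwfun]
    rw [integral_const_mul]
    congr 1
    exact integral_sub_right_eq_self (fun x => Real.exp (-a * ‖x‖ ^ 2)) μ
  have hpos : 0 < ∫ x, w x := by
    rw [hIw]; exact mul_pos hK (gauss_pos ha)
  -- first moment
  have hf_int : Integrable (fun y : EuclideanSpace ℝ (Fin d) =>
      Real.exp (-a * ‖y‖ ^ 2) • (y + μ)) volume := by
    have h1 := gauss_moment_integrable (d := d) ha
    have h2 := (gauss_integrable (d := d) ha).smul_const μ
    have := h1.add h2
    exact this.congr (Filter.Eventually.of_forall fun y => by simp [smul_add])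
  have hfx : ∀ x : EuclideanSpace ℝ (Fin d),
      w x • x = K • (Real.exp (-a * ‖x - μ‖ ^ 2) • ((x - μ) + μ)) := by
    intro x
    rw [hwK x, sub_add_cancel, mul_smul]
  have hint_wx : Integrable (fun x => w x • x) volume := by
    rw [funext hfx]
    exact ((hf_int.comp_sub_right μ).smul K)
  have hIwx : (∫ x, w x • x)
      = (K * ∫ x : EuclideanSpace ℝ (Fin d), Real.exp (-a * ‖x‖ ^ 2)) • μ := by
    rw [funext hfx, integral_smul]
    have htrans : (∫ x : EuclideanSpace ℝ (Fin d),
        Real.exp (-a * ‖x - μ‖ ^ 2) • ((x - μ) + μ))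
        = ∫ y : EuclideanSpace ℝ (Fin d), Real.exp (-a * ‖y‖ ^ 2) • (y + μ) :=
      integral_sub_right_eq_self (fun y => Real.exp (-a * ‖y‖ ^ 2) • (y + μ)) μ
    rw [htrans]
    have hsplit : (fun y : EuclideanSpace ℝ (Fin d) => Real.exp (-a * ‖y‖ ^ 2) • (y + μ))
        = fun y => Real.exp (-a * ‖y‖ ^ 2) • y + Real.exp (-a * ‖y‖ ^ 2) • μ := by
      funext y; rw [smul_add]
    rw [hsplit, integral_add (gauss_moment_integrable ha)
      ((gauss_integrable ha).smul_const μ), gauss_moment_zero ha, zero_add,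
      integral_smul_const, smul_smul, mul_comm]
  refine ⟨hint_w, hpos, hint_wx, ?_⟩
  rw [hIwx, hIw, smul_smul, inv_mul_cancel₀ (ne_of_gt (hIw ▸ hpos)), one_smul, hμ_def,
    hg_def, smul_add]
  abel
end

section
/- Let q : ℝ × E → ℝ be a family of positive probability densities, p : E → ℝ a positive density, and v : ℝ × E → E a drift field, all sufficiently smooth in x. Fix t ∈ ℝ and assume: (i) the Fokker–Planck identity ∂_t q(t, x) = −div_x(q(t, ·) v(t, ·))(x) + Δ q(t, ·)(x) holds pointwise; (ii) the function F(s) = ∫ q(s, x) · log(q(s, x)/p(x)) dx is differentiable at t with F'(t) = ∫ ∂_t q(t, x) · log(q(t, x)/p(x)) dx (differentiation under the integral together with mass conservation); (iii) the integration-by-parts identities ∫ div_x(q(t,·) v(t,·))(x) · log(q(t,x)/p(x)) dx = −∫ q(t,x) ⟨v(t,x), ∇ log(q(t,·)/p)(x)⟩ dx and ∫ Δq(t,·)(x) · log(q(t,x)/p(x)) dx = −∫ ⟨∇_x q(t,x), ∇ log(q(t,·)/p)(x)⟩ dx hold, with all integrands integrable. Then the KL gradient-flow identity holds: F'(t) =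 −∫ q(t,x) · [ ‖∇ log(q(t,·)/p)(x)‖² − ⟨∇ log(q(t,·)/p)(x), v(t,x) − ∇ log p(x)⟩ ] dx. -/
open scoped RealInnerProductSpace BigOperators
open MeasureTheory

/-- Spatial divergence of a vector field on Euclidean space:
`div V x = ∑ i, ∂ᵢ Vᵢ x`. -/
noncomputable def vecDiv {d : ℕ}
    (V : EuclideanSpace ℝ (Fin d) → EuclideanSpace ℝ (Fin d))
    (x : EuclideanSpace ℝ (Fin d)) : ℝ :=
  ∑ i, fderiv ℝ (fun y => V y i) x (EuclideanSpace.single i 1)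

/-- Spatial Laplacian of a scalar field: `Δ f = div (∇ f)`. -/
noncomputable def lap {d : ℕ}
    (f : EuclideanSpace ℝ (Fin d) → ℝ)
    (x : EuclideanSpace ℝ (Fin d)) : ℝ :=
  vecDiv (fun y => gradient f y) x

/-- **Gradient flow of the KL functional along a driven Langevin dynamic.**
Assuming (i) the pointwise Fokker–Planck identity
`∂ₜ q = -div (q v) + Δ q`, (ii) differentiation under the integral for
`F s = ∫ q s x * log (q s x / p x) dx` at `t`, and (iii) the integration-by-parts
identities (with integrable integrands), the derivative of the KL divergence
satisfies
`F' t = -∫ q t x * (‖∇ log (q t / p) x‖² - ⟪∇ log (q t / p) x, v t x - ∇ log p x⟫) dx`. -/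
theorem kl_gradient_flow
    (d : ℕ) (hd : 1 ≤ d)
    (q : ℝ → EuclideanSpace ℝ (Fin d) → ℝ)
    (p : EuclideanSpace ℝ (Fin d) → ℝ)
    (v : ℝ → EuclideanSpace ℝ (Fin d) → EuclideanSpace ℝ (Fin d))
    (t : ℝ)
    (hq_pos : ∀ s x, 0 < q s x)
    (hp_pos : ∀ x, 0 < p x)
    (hq_smooth : ∀ s, ContDiff ℝ (⊤ : ℕ∞) (q s))
    (hp_smooth : ContDiff ℝ (⊤ : ℕ∞) p)
    (hv_smooth : ∀ s, ContDiff ℝ (⊤ : ℕ∞) (v s))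
    -- (i) Fokker–Planck identity, pointwise
    (hFP : ∀ x, deriv (fun s => q s x) t
        = - vecDiv (fun y => q t y • v t y) x + lap (q t) x)
    -- (ii) differentiation under the integral sign
    (hF' : HasDerivAt (fun s => ∫ x, q s x * Real.log (q s x / p x))
        (∫ x, deriv (fun s => q s x) t * Real.log (q t x / p x)) t)
    -- (iii) integration by parts, with all integrands integrable
    (hib1L : Integrable (fun x =>
        vecDiv (fun y => q t y • v t y) x * Real.log (q t x / p x)) volume)
    (hib1R : Integrable (fun x =>
        q t x * ⟪v t x, gradient (fun y => Real.log (q t y / p y)) x⟫) volume)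
    (hib1 : ∫ x, vecDiv (fun y => q t y • v t y) x * Real.log (q t x / p x)
        = - ∫ x, q t x * ⟪v t x, gradient (fun y => Real.log (q t y / p y)) x⟫)
    (hib2L : Integrable (fun x => lap (q t) x * Real.log (q t x / p x)) volume)
    (hib2R : Integrable (fun x =>
        ⟪gradient (q t) x, gradient (fun y => Real.log (q t y / p y)) x⟫) volume)
    (hib2 : ∫ x, lap (q t) x * Real.log (q t x / p x)
        = - ∫ x, ⟪gradient (q t) x, gradient (fun y => Real.log (q t y / p y)) x⟫) :
    deriv (fun s => ∫ x, q s x * Real.log (q s x / p x)) t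
      = - ∫ x, q t x *
          (‖gradient (fun y => Real.log (q t y / p y)) x‖ ^ 2
            - ⟪gradient (fun y => Real.log (q t y / p y)) x,
                v t x - gradient (fun y => Real.log (p y)) x⟫) := by
  classical
  set G : EuclideanSpace ℝ (Fin d) → EuclideanSpace ℝ (Fin d) := gradient (fun y => Real.log (q t y / p y)) with hG
  set P : EuclideanSpace ℝ (Fin d) → EuclideanSpace ℝ (Fin d) := gradient (fun y => Real.log (p y)) with hP
  -- gradient of log of a positive smooth function
  have hlog_grad : ∀ (f : EuclideanSpace ℝ (Fin d) → ℝ), ContDiff ℝ (⊤ : ℕ∞) f → (∀ x, 0 < f x) → ∀ x,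
      gradient (fun y => Real.log (f y)) x = (f x)⁻¹ • gradient f x := by
    intro f hf hfpos x
    have hdf : HasFDerivAt f (fderiv ℝ f x) x := (hf.differentiable (by simp) x).hasFDerivAt
    have hdl : HasDerivAt Real.log (f x)⁻¹ (f x) := Real.hasDerivAt_log (hfpos x).ne'
    have h := hdl.comp_hasFDerivAt x hdf
    have : fderiv ℝ (fun y => Real.log (f y)) x = (f x)⁻¹ • fderiv ℝ f x := h.fderiv
    simp only [gradient, this, _root_.map_smul]
  have hPp : ∀ x, P x = (p x)⁻¹ • gradient p x := hlog_grad p hp_smooth hp_pos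
  -- gradient of log (q/p) = gradient log q - gradient log p
  have hGx : ∀ x, G x = (q t x)⁻¹ • gradient (q t) x - P x := by
    intro x
    have hfun : (fun y => Real.log (q t y / p y))
        = fun y => Real.log (q t y) - Real.log (p y) := by
      funext y; exact Real.log_div (hq_pos t y).ne' (hp_pos y).ne'
    have hdq : DifferentiableAt ℝ (fun y => Real.log (q t y)) x := by
      exact ((Real.hasDerivAt_log (hq_pos t x).ne').comp_hasFDerivAt x
        ((hq_smooth t).differentiable (by simp) x).hasFDerivAt).differentiableAt
    have hdp : DifferentiableAt ℝ (fun y => Real.log (p y)) x := by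
      exact ((Real.hasDerivAt_log (hp_pos x).ne').comp_hasFDerivAt x
        (hp_smooth.differentiable (by simp) x).hasFDerivAt).differentiableAt
    have hsub : fderiv ℝ (fun y => Real.log (q t y / p y)) x
        = fderiv ℝ (fun y => Real.log (q t y)) x - fderiv ℝ (fun y => Real.log (p y)) x := by
      rw [hfun]; exact fderiv_fun_sub hdq hdp
    have h1 := hlog_grad (q t) (hq_smooth t) (hq_pos t) x
    simp only [hG, hP, gradient, hsub, map_sub]
    simp only [gradient] at h1
    rw [h1]
  -- gradient q = q • (G + P)
  have hQg : ∀ x, gradient (q t) x = q t x • (G x + P x) := by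
    intro x
    rw [hGx x]
    rw [smul_add, smul_sub, smul_smul, mul_inv_cancel₀ (hq_pos t x).ne', one_smul]
    abel
  -- the derivative via hF'
  rw [hF'.deriv]
  have hstep1 : (fun x : EuclideanSpace ℝ (Fin d) => deriv (fun s => q s x) t * Real.log (q t x / p x))
      = fun x => (- vecDiv (fun y => q t y • v t y) x) * Real.log (q t x / p x)
          + lap (q t) x * Real.log (q t x / p x) := by
    funext x; rw [hFP x]; ring
  rw [hstep1]
  have h1L' : Integrable (fun x =>
      (- vecDiv (fun y => q t y • v t y) x) * Real.log (q t x / p x)) volume := by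
    simp only [neg_mul]; exact hib1L.neg
  rw [integral_add h1L' hib2L]
  have hneg : ∫ x, (- vecDiv (fun y => q t y • v t y) x) * Real.log (q t x / p x)
      = - ∫ x, vecDiv (fun y => q t y • v t y) x * Real.log (q t x / p x) := by
    rw [← integral_neg]; congr 1; funext x; ring
  rw [hneg, hib1, hib2, neg_neg, ← sub_eq_add_neg, ← integral_sub hib1R hib2R,
    ← integral_neg]
  congr 1
  funext x
  rw [hQg x]
  have h1 : ⟪(q t x) • (G x + P x), G x⟫ = q t x * (⟪G x, G x⟫ + ⟪P x, G x⟫) := by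
    rw [real_inner_smul_left, inner_add_left]
  rw [h1, inner_sub_right, real_inner_self_eq_norm_sq,
    real_inner_comm (v t x) (G x), real_inner_comm (P x) (G x)]
  ring
end
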